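/- arXiv:2207.08573 — 5 statements merged into one kernel-verified Lean document; each statement's English description precedes it below -/
import Mathlib

section
/- If I is an ideal of a polynomial ring R = K[x_1,...,x_N] over a field K generated by polynomials f_1,...,f_n such that, with respect to a fixed monomial order <, the initial term of each f_j is a nonzero scalar multiple of a distinct indeterminate x_{i_j}, and x_{i_j} does not appear in any term of f_m for m > j, then {f_1,...,f_n} is a Gröbner basis of I with respect to <, and the initial ideal in_<(I) is generated by the indeterminates x_{i_1},...,x_{i_n}. -/
open MvPolynomial

/-- `le` is a monomial order on the monomials of `K[x_1,…,x_N]`: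
a linear order, with `0` least, compatible with addition of exponent vectors. -/
def IsMonomialOrder {N : ℕ} (le : (Fin N →₀ ℕ) → (Fin N →₀ ℕ) → Prop) : Prop :=
  IsLinearOrder (Fin N →₀ ℕ) le ∧ (∀ a, le 0 a) ∧ ∀ a b c, le a b → le (a + c) (b + c)

/-- `m` is the leading monomial of `f` with respect to `le`. -/
def IsLeadMono {K : Type*} [Field K] {N : ℕ}
    (le : (Fin N →₀ ℕ) → (Fin N →₀ ℕ) → Prop)
    (f : MvPolynomial (Fin N) K) (m : Fin N →₀ ℕ) : Prop :=
  m ∈ f.support ∧ ∀ m' ∈ f.support, le m' m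

/-- The initial ideal of `I` with respect to `le`: the ideal generated by the
leading terms of the (nonzero) elements of `I`. -/
noncomputable def initialIdeal {K : Type*} [Field K] {N : ℕ}
    (le : (Fin N →₀ ℕ) → (Fin N →₀ ℕ) → Prop)
    (I : Ideal (MvPolynomial (Fin N) K)) : Ideal (MvPolynomial (Fin N) K) :=
  Ideal.span {t | ∃ g ∈ I, ∃ m, IsLeadMono le g m ∧
    t = MvPolynomial.monomial m (MvPolynomial.coeff m g)}

/-! Since the leading term of `f j` is `u j • x_{idx j}`, the substitution
`x_{idx j} ↦ x_{idx j} - f j / u j` kills `f j`, fixes every `f m` with `m > j` (they do not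
involve `x_{idx j}`), and replaces each variable `x_k` by a polynomial whose monomials are all
`≤ x_k`. Such a substitution cannot raise monomials, so it preserves the leading term of every
polynomial whose leading monomial does not involve `x_{idx j}`. Performing the substitutions for
`j = 1, …, n` in turn sends `I` to `0`; hence the leading monomial of every nonzero element of `I`
is divisible by some `x_{idx j}`, i.e. `in_<(I) ⊆ (x_{idx j})`. The reverse inclusion holds
because `u j • x_{idx j}` is the leading term of `f j ∈ I`. -/

section SupportLE

variable {K : Type*} [CommSemiring K] {N : ℕ} {le : (Fin N →₀ ℕ) → (Fin N →₀ ℕ) → Prop}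

def SupportLE (le : (Fin N →₀ ℕ) → (Fin N →₀ ℕ) → Prop) (p : MvPolynomial (Fin N) K)
    (m : Fin N →₀ ℕ) : Prop :=
  ∀ ν ∈ p.support, le ν m

theorem IsMonomialOrder.single_le (hle : IsMonomialOrder le) {d : Fin N →₀ ℕ} {i : Fin N}
    (hi : d i ≠ 0) : le (Finsupp.single i 1) d := by
  have hd : Finsupp.single i 1 ≤ d := Finsupp.single_le_iff.mpr (Nat.one_le_iff_ne_zero.mpr hi)
  have h := hle.2.2 0 (d - Finsupp.single i 1) (Finsupp.single i 1) (hle.2.1 _)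
  rwa [zero_add, tsub_add_cancel_of_le hd] at h

theorem supportLE_monomial (hle : IsMonomialOrder le) (m : Fin N →₀ ℕ) (c : K) :
    SupportLE le (monomial m c) m := by
  intro ν hν
  rw [Finset.mem_singleton.mp (support_monomial_subset hν)]
  exact hle.1.refl m

theorem SupportLE.mul (hle : IsMonomialOrder le) {p q : MvPolynomial (Fin N) K}
    {a b : Fin N →₀ ℕ} (hp : SupportLE le p a) (hq : SupportLE le q b) :
    SupportLE le (p * q) (a + b) := by
  intro ν hν
  obtain ⟨ν₁, h₁, ν₂, h₂, rfl⟩ := Finset.mem_add.mp (support_mul p q hν)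
  have := hle.1
  refine trans_of le (hle.2.2 _ _ ν₂ (hp ν₁ h₁)) ?_
  simpa only [add_comm a] using hle.2.2 _ _ a (hq ν₂ h₂)

theorem SupportLE.pow (hle : IsMonomialOrder le) {p : MvPolynomial (Fin N) K}
    {a : Fin N →₀ ℕ} (hp : SupportLE le p a) (k : ℕ) : SupportLE le (p ^ k) (k • a) := by
  induction k with
  | zero => simpa using supportLE_monomial hle (0 : Fin N →₀ ℕ) (1 : K)
  | succ k ih => simpa only [pow_succ, succ_nsmul] using ih.mul hle hp

theorem SupportLE.prod (hle : IsMonomialOrder le) {ι : Type*} (s : Finset ι)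
    {g : ι → MvPolynomial (Fin N) K} {a : ι → Fin N →₀ ℕ} (hg : ∀ i ∈ s, SupportLE le (g i) (a i)) :
    SupportLE le (∏ i ∈ s, g i) (∑ i ∈ s, a i) := by
  induction s using Finset.cons_induction with
  | empty => simpa using supportLE_monomial hle (0 : Fin N →₀ ℕ) (1 : K)
  | cons i s hi ih =>
    rw [Finset.prod_cons, Finset.sum_cons]
    exact (hg i (s.mem_cons_self i)).mul hle (ih fun j hj => hg j (Finset.mem_cons_of_mem hj))

theorem supportLE_aeval_monomial (hle : IsMonomialOrder le) {v : Fin N → MvPolynomial (Fin N) K}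
    (hv : ∀ k, SupportLE le (v k) (Finsupp.single k 1)) (μ : Fin N →₀ ℕ) (c : K) :
    SupportLE le (aeval v (monomial μ c)) μ := by
  have h := (supportLE_monomial hle 0 c).mul hle
    (SupportLE.prod hle μ.support fun k _ => (hv k).pow hle (μ k))
  simp only [Finsupp.smul_single_one, zero_add] at h
  rw [show ∑ k ∈ μ.support, Finsupp.single k (μ k) = μ from μ.sum_single] at h
  rwa [aeval_monomial, algebraMap_eq, ← monomial_zero', Finsupp.prod]

theorem exists_mem_support_le_of_mem_support_aeval (hle : IsMonomialOrder le)
    {v : Fin N → MvPolynomial (Fin N) K} (hv : ∀ k, SupportLE le (v k) (Finsupp.single k 1))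
    {p : MvPolynomial (Fin N) K} {ν : Fin N →₀ ℕ} (hν : ν ∈ (aeval v p).support) :
    ∃ μ ∈ p.support, le ν μ := by
  rw [mem_support_iff, p.as_sum, map_sum, coeff_sum] at hν
  obtain ⟨μ, hμ, hμν⟩ := Finset.exists_ne_zero_of_sum_ne_zero hν
  exact ⟨μ, hμ, supportLE_aeval_monomial hle hv μ _ ν (mem_support_iff.mpr hμν)⟩

end SupportLE

theorem aeval_update_X_of_notMem_vars {σ K : Type*} [CommSemiring K] [DecidableEq σ] {i : σ}
    (r : MvPolynomial σ K) {q : MvPolynomial σ K} (hq : i ∉ q.vars) :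
    aeval (Function.update X i r) q = q := by
  conv_rhs => rw [← aeval_X_left_apply q]
  exact eval₂Hom_congr' rfl
    (fun k hk _ => Function.update_of_ne (ne_of_mem_of_not_mem hk hq) ..) rfl

theorem mem_support_sub_monomial_coeff {σ R : Type*} [CommRing R] {p : MvPolynomial σ R}
    {m μ : σ →₀ ℕ} : μ ∈ (p - monomial m (coeff m p)).support ↔ μ ∈ p.support ∧ μ ≠ m := by
  classical
  by_cases h : μ = m
  · simp [h]
  · simp [coeff_monomial, Ne.symm h, h]

section Field

variable {K : Type*} [Field K] {N : ℕ} {le : (Fin N →₀ ℕ) → (Fin N →₀ ℕ) → Prop}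

theorem isLeadMono_aeval (hle : IsMonomialOrder le) {v : Fin N → MvPolynomial (Fin N) K}
    (hv : ∀ k, SupportLE le (v k) (Finsupp.single k 1)) {m : Fin N →₀ ℕ}
    (hm : aeval v (monomial m (1 : K)) = monomial m 1) {p : MvPolynomial (Fin N) K}
    (hp : IsLeadMono le p m) : IsLeadMono le (aeval v p) m := by
  have := hle.1
  set r := p - monomial m (coeff m p)
  have hr : ∀ μ ∈ r.support, μ ∈ p.support ∧ μ ≠ m := fun μ => mem_support_sub_monomial_coeff.mp
  have hlt : ∀ ν ∈ (aeval v r).support, le ν m ∧ ν ≠ m := by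
    intro ν hν
    obtain ⟨μ, hμ, hνμ⟩ := exists_mem_support_le_of_mem_support_aeval hle hv hν
    have hμm := hp.2 μ (hr μ hμ).1
    exact ⟨trans_of le hνμ hμm, fun h => (hr μ hμ).2 (antisymm_of le hμm (h ▸ hνμ))⟩
  have hfix : aeval v (monomial m (coeff m p)) = monomial m (coeff m p) := by
    rw [← mul_one (coeff m p), ← smul_eq_mul, ← smul_monomial, map_smul, hm]
  have hsplit : aeval v p = monomial m (coeff m p) + aeval v r := by
    rw [← hfix, ← map_add, add_sub_cancel]
  have hcoeff : coeff m (aeval v r) = 0 := by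
    by_contra h
    exact (hlt m (mem_support_iff.mpr h)).2 rfl
  refine ⟨?_, fun ν hν => ?_⟩
  · rw [mem_support_iff, hsplit, coeff_add, hcoeff, add_zero, coeff_monomial, if_pos rfl]
    exact mem_support_iff.mp hp.1
  · rw [hsplit] at hν
    rcases Finset.mem_union.mp (support_add hν) with h | h
    · exact supportLE_monomial hle m _ ν h
    · exact (hlt ν h).1

noncomputable def elimSubst (i : Fin N) (p : MvPolynomial (Fin N) K) :
    MvPolynomial (Fin N) K →ₐ[K] MvPolynomial (Fin N) K :=
  aeval (Function.update X i (X i - C (coeff (Finsupp.single i 1) p)⁻¹ * p))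

theorem elimSubst_apply_of_notMem_vars {i : Fin N} (p : MvPolynomial (Fin N) K)
    {q : MvPolynomial (Fin N) K} (hq : i ∉ q.vars) : elimSubst i p q = q :=
  aeval_update_X_of_notMem_vars _ hq

theorem IsLeadMono.notMem_vars_sub_monomial (hle : IsMonomialOrder le) {i : Fin N}
    {p : MvPolynomial (Fin N) K} (hp : IsLeadMono le p (Finsupp.single i 1)) :
    i ∉ (p - monomial (Finsupp.single i 1) (coeff (Finsupp.single i 1) p)).vars := by
  have := hle.1
  rw [mem_vars_iff_mem_support]
  rintro ⟨d, hd, hi⟩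
  obtain ⟨hdp, hne⟩ := mem_support_sub_monomial_coeff.mp hd
  exact hne (antisymm_of le (hp.2 d hdp) (hle.single_le (Finsupp.mem_support_iff.mp hi)))

theorem elimSubst_self (hle : IsMonomialOrder le) {i : Fin N} {p : MvPolynomial (Fin N) K}
    (hp : IsLeadMono le p (Finsupp.single i 1)) : elimSubst i p p = 0 := by
  set c := coeff (Finsupp.single i 1) p
  have hc : c ≠ 0 := mem_support_iff.mp hp.1
  have hX : elimSubst i p (monomial (Finsupp.single i 1) c) = C c * X i - p := by
    rw [← C_mul_X_eq_monomial, map_mul, elimSubst, aeval_C, aeval_X,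
      Function.update_self, algebraMap_eq, mul_sub, ← mul_assoc, ← C_mul, mul_inv_cancel₀ hc,
      C_1, one_mul]
  calc elimSubst i p p
      = elimSubst i p (monomial (Finsupp.single i 1) c)
        + elimSubst i p (p - monomial (Finsupp.single i 1) c) := by rw [← map_add, add_sub_cancel]
    _ = 0 := by
      rw [hX, elimSubst_apply_of_notMem_vars p (hp.notMem_vars_sub_monomial hle),
        C_mul_X_eq_monomial]
      ring

theorem isLeadMono_elimSubst (hle : IsMonomialOrder le) {i : Fin N}
    {p : MvPolynomial (Fin N) K} (hp : IsLeadMono le p (Finsupp.single i 1))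
    {m : Fin N →₀ ℕ} (hm : m i = 0) {q : MvPolynomial (Fin N) K} (hq : IsLeadMono le q m) :
    IsLeadMono le (elimSubst i p q) m := by
  refine isLeadMono_aeval hle (fun k => ?_) ?_ hq
  · rcases eq_or_ne k i with rfl | hki
    · intro ν hν
      rw [Function.update_self, ← smul_eq_C_mul] at hν
      rcases Finset.mem_union.mp (support_sub _ _ _ hν) with h | h
      · exact supportLE_monomial hle _ (1 : K) ν h
      · exact hp.2 ν (support_smul h)
    · rw [Function.update_of_ne hki]
      exact supportLE_monomial hle _ (1 : K)
  · refine elimSubst_apply_of_notMem_vars p ?_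
    rwa [vars_monomial one_ne_zero, Finsupp.notMem_support_iff]

theorem exists_apply_ne_zero_of_isLeadMono_of_mem_span (hle : IsMonomialOrder le) {n : ℕ}
    (f : Fin n → MvPolynomial (Fin N) K) (idx : Fin n → Fin N)
    (hlead : ∀ j, IsLeadMono le (f j) (Finsupp.single (idx j) 1))
    (hnot : ∀ j m : Fin n, j < m → ∀ d ∈ (f m).support, d (idx j) = 0)
    {g : MvPolynomial (Fin N) K} (hg : g ∈ Ideal.span (Set.range f))
    {m : Fin N →₀ ℕ} (hm : IsLeadMono le g m) : ∃ j, m (idx j) ≠ 0 := by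
  induction n generalizing g with
  | zero =>
    rw [Set.range_eq_empty, Ideal.span_empty, Ideal.mem_bot] at hg
    simp [hg, IsLeadMono] at hm
  | succ n ih =>
    by_contra! hm0
    set σ := elimSubst (idx 0) (f 0)
    have hσ : Ideal.map σ (Ideal.span (Set.range f)) ≤ Ideal.span (Set.range (f ∘ Fin.succ)) := by
      rw [Ideal.map_span, Ideal.span_le]
      rintro _ ⟨_, ⟨j, rfl⟩, rfl⟩
      cases j using Fin.cases with
      | zero => simp [σ, elimSubst_self hle (hlead 0)]
      | succ j =>
        refine Ideal.subset_span ⟨j, (elimSubst_apply_of_notMem_vars _ ?_).symm⟩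
        rw [mem_vars_iff_mem_support]
        rintro ⟨d, hd, hi⟩
        exact Finsupp.mem_support_iff.mp hi (hnot 0 j.succ (Fin.succ_pos j) d hd)
    obtain ⟨j, hj⟩ := ih (f ∘ Fin.succ) (idx ∘ Fin.succ) (fun j => hlead j.succ)
      (fun j k hjk => hnot j.succ k.succ (Fin.succ_lt_succ_iff.mpr hjk))
      (hσ (Ideal.mem_map_of_mem σ hg)) (isLeadMono_elimSubst hle (hlead 0) (hm0 0) hm)
    exact hj (hm0 j.succ)

theorem span_range_monomial_single_eq_span_range_X {ι σ : Type*} (idx : ι → σ) (u : ι → K)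
    (hu : ∀ j, u j ≠ 0) :
    Ideal.span (Set.range fun j => monomial (Finsupp.single (idx j) 1) (u j)) =
      Ideal.span (Set.range fun j => (X (idx j) : MvPolynomial σ K)) := by
  apply le_antisymm <;> rw [Ideal.span_le, Set.range_subset_iff] <;> intro j
  · rw [← C_mul_X_eq_monomial]
    exact Ideal.mul_mem_left _ _ (Ideal.subset_span ⟨j, rfl⟩)
  · have hX : (X (idx j) : MvPolynomial σ K) =
        C (u j)⁻¹ * monomial (Finsupp.single (idx j) 1) (u j) := by
      rw [C_mul_monomial, inv_mul_cancel₀ (hu j), X]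
    rw [SetLike.mem_coe, hX]
    exact Ideal.mul_mem_left _ _ (Ideal.subset_span ⟨j, rfl⟩)

end Field

theorem stmt0_general {K : Type*} [Field K] {N n : ℕ}
    (le : (Fin N →₀ ℕ) → (Fin N →₀ ℕ) → Prop)
    (hle : IsMonomialOrder le)
    (f : Fin n → MvPolynomial (Fin N) K)
    (idx : Fin n → Fin N)
    (u : Fin n → K)
    (hlead : ∀ j, IsLeadMono le (f j) (Finsupp.single (idx j) 1) ∧
      MvPolynomial.coeff (Finsupp.single (idx j) 1) (f j) = u j)
    (hnot : ∀ j m : Fin n, j < m → ∀ d ∈ (f m).support, d (idx j) = 0)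
    (I : Ideal (MvPolynomial (Fin N) K)) (hI : I = Ideal.span (Set.range f)) :
    initialIdeal le I =
      Ideal.span (Set.range fun j =>
        MvPolynomial.monomial (Finsupp.single (idx j) 1) (u j)) ∧
    initialIdeal le I =
      Ideal.span (Set.range fun j => (MvPolynomial.X (idx j) : MvPolynomial (Fin N) K)) := by
  have hu : ∀ j, u j ≠ 0 := fun j => (hlead j).2 ▸ mem_support_iff.mp (hlead j).1.1
  have hinit : initialIdeal le I ≤
      Ideal.span (Set.range fun j => (X (idx j) : MvPolynomial (Fin N) K)) := by
    rw [initialIdeal, Ideal.span_le]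
    rintro _ ⟨g, hg, m, hm, rfl⟩
    obtain ⟨j, hj⟩ := exists_apply_ne_zero_of_isLeadMono_of_mem_span hle f idx
      (fun j => (hlead j).1) hnot (hI ▸ hg) hm
    rw [Set.range_comp' X idx, SetLike.mem_coe, mem_ideal_span_X_image]
    intro m' hm'
    rw [Finset.mem_singleton.mp (support_monomial_subset hm')]
    exact ⟨idx j, Set.mem_range_self j, hj⟩
  have hlead_mem : Ideal.span (Set.range fun j =>
      monomial (Finsupp.single (idx j) 1) (u j)) ≤ initialIdeal le I := by
    rw [Ideal.span_le]
    rintro _ ⟨j, rfl⟩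
    exact Ideal.subset_span
      ⟨f j, hI ▸ Ideal.subset_span ⟨j, rfl⟩, _, (hlead j).1, by rw [(hlead j).2]⟩
  rw [span_range_monomial_single_eq_span_range_X idx u hu] at hlead_mem ⊢
  exact ⟨le_antisymm hinit hlead_mem, le_antisymm hinit hlead_mem⟩

/-- triangular complete intersections have Gröbner bases of the
given generators, with initial ideal an ideal of indeterminates.
If the leading term of each `f j` is `u j • x_{idx j}` for distinct indeterminates
`x_{idx j}`, and `x_{idx j}` does not appear in any term of `f m` for `m > j`, then
the `f j` form a Gröbner basis of the ideal `I` they generate (the leading terms of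
the `f j` generate the initial ideal of `I`), and `in_<(I)` is generated by the
indeterminates `x_{idx j}`. -/
theorem stmt0 {K : Type*} [Field K] {N n : ℕ}
    (le : (Fin N →₀ ℕ) → (Fin N →₀ ℕ) → Prop)
    (hle : IsMonomialOrder le)
    (f : Fin n → MvPolynomial (Fin N) K)
    (idx : Fin n → Fin N) (hinj : Function.Injective idx)
    (u : Fin n → K) (hu : ∀ j, u j ≠ 0)
    (hlead : ∀ j, IsLeadMono le (f j) (Finsupp.single (idx j) 1) ∧
      MvPolynomial.coeff (Finsupp.single (idx j) 1) (f j) = u j)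
    (hnot : ∀ j m : Fin n, j < m → ∀ d ∈ (f m).support, d (idx j) = 0)
    (I : Ideal (MvPolynomial (Fin N) K)) (hI : I = Ideal.span (Set.range f)) :
    initialIdeal le I =
      Ideal.span (Set.range fun j =>
        MvPolynomial.monomial (Finsupp.single (idx j) 1) (u j)) ∧
    initialIdeal le I =
      Ideal.span (Set.range fun j => (MvPolynomial.X (idx j) : MvPolynomial (Fin N) K)) :=
  stmt0_general le hle f idx u hlead hnot I hI
end

section
/- If the leading terms of two polynomials f and g in a polynomial ring over a field with respect to a monomial order are relatively prime monomials (up to nonzero scalar), then the S-polynomial S(f,g) reduces to zero modulo {f,g}, and hence {f,g} is a Gröbner basis for the ideal it generates. -/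
open MvPolynomial

/-!
Let `a`, `b` be the coprime leading monomials of `f`, `g`. With `f = LT(f) + f₁` and
`g = LT(g) + g₁`, the S-polynomial is a scalar multiple of `f₁ g - g₁ f`. The leading
monomials of `g₁ f` and `f₁ g` cannot coincide: `t + a = t' + b` with `a`, `b` coprime forces
`b ≤ t` pointwise, impossible since every monomial `t` of `g₁` is smaller than `b`. Hence
nothing cancels and `f₁ g - g₁ f` is a standard representation. The same argument, applied to
`h = P f + Q g` after replacing `P` by its remainder modulo `g`, shows that `LM(h)` is
divisible by `a` or `b` for every `h ∈ ⟨f, g⟩`, i.e. `{f, g}` is a Gröbner basis.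
-/

namespace Finsupp

variable {σ : Type*} {a b : σ →₀ ℕ}

theorem le_of_add_eq_add_of_coprime (hcop : ∀ v, a v = 0 ∨ b v = 0) {p q : σ →₀ ℕ}
    (h : p + a = q + b) : b ≤ p := by
  intro v
  have hv := DFunLike.congr_fun h v
  simp only [coe_add, Pi.add_apply] at hv
  rcases hcop v with h0 | h0 <;> omega

theorem tsub_eq_self_of_coprime (hcop : ∀ v, a v = 0 ∨ b v = 0) : b - a = b := by
  ext v
  rcases hcop v with h0 | h0 <;> simp [h0]

end Finsupp

namespace MonomialOrder

open scoped MonomialOrder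

variable {σ : Type*} {m : MonomialOrder σ}

section CommRing

variable {R : Type*} [CommRing R]

theorem toSyn_lt_of_mem_support_subLTerm {f : MvPolynomial σ R} {x : σ →₀ ℕ}
    (hx : x ∈ (m.subLTerm f).support) : x ≺[m] m.degree f := by
  classical
  have hne : x ≠ m.degree f := by
    rintro rfl
    simp [subLTerm, leadingCoeff] at hx
  have hxf : x ∈ f.support := by
    simpa [subLTerm, coeff_monomial, Ne.symm hne] using hx
  exact lt_of_le_of_ne (m.le_degree hxf) (m.toSyn.injective.ne hne)

theorem degree_add_of_degree_ne {u v : MvPolynomial σ R}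
    (huv : u ≠ 0 → v ≠ 0 → m.degree u ≠ m.degree v) :
    m.toSyn (m.degree (u + v)) = m.toSyn (m.degree u) ⊔ m.toSyn (m.degree v) := by
  by_cases hu : u = 0
  · simp [hu]
  by_cases hv : v = 0
  · simp [hv]
  exact degree_add_of_ne (huv hu hv)

theorem le_degree_add_of_degree_ne {u v : MvPolynomial σ R}
    (huv : u ≠ 0 → v ≠ 0 → m.degree u ≠ m.degree v) {x : σ →₀ ℕ}
    (hx : x ∈ u.support ∨ x ∈ v.support) : x ≼[m] m.degree (u + v) := by
  rw [degree_add_of_degree_ne huv]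
  rcases hx with hx | hx
  · exact le_sup_of_le_left (m.le_degree hx)
  · exact le_sup_of_le_right (m.le_degree hx)

theorem add_ne_zero_of_degree_ne {u v : MvPolynomial σ R}
    (huv : u ≠ 0 → v ≠ 0 → m.degree u ≠ m.degree v) (h : u ≠ 0 ∨ v ≠ 0) :
    u + v ≠ 0 := by
  intro h0
  have hvu : v = -u := eq_neg_of_add_eq_zero_right h0
  have hu : u ≠ 0 := by rintro rfl; simp_all
  exact huv hu (by simpa [hvu] using hu) (by rw [hvu, degree_neg])

theorem degree_add_eq_or_of_degree_ne {u v : MvPolynomial σ R}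
    (huv : u ≠ 0 → v ≠ 0 → m.degree u ≠ m.degree v) (h : u + v ≠ 0) :
    (u ≠ 0 ∧ m.degree (u + v) = m.degree u) ∨
      (v ≠ 0 ∧ m.degree (u + v) = m.degree v) := by
  by_cases hu : u = 0
  · simp_all
  by_cases hv : v = 0
  · simp_all
  rcases max_choice (m.toSyn (m.degree u)) (m.toSyn (m.degree v)) with e | e <;>
    rw [← degree_add_of_ne (huv hu hv), m.toSyn.injective.eq_iff] at e
  · exact .inl ⟨hu, e⟩
  · exact .inr ⟨hv, e⟩

theorem sPolynomial_eq_of_coprime {f g : MvPolynomial σ R}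
    (hcop : ∀ v, m.degree f v = 0 ∨ m.degree g v = 0) :
    m.sPolynomial f g = m.subLTerm f * g - m.subLTerm g * f := by
  rw [sPolynomial, Finsupp.tsub_eq_self_of_coprime hcop,
    Finsupp.tsub_eq_self_of_coprime fun v => (hcop v).symm, subLTerm, subLTerm]
  ring

variable [NoZeroDivisors R]

theorem degree_mul_ne_of_coprime {f g P Q : MvPolynomial σ R}
    (hcop : ∀ v, m.degree f v = 0 ∨ m.degree g v = 0)
    (hP : ∀ x ∈ P.support, ¬ m.degree g ≤ x) :
    P * f ≠ 0 → Q * g ≠ 0 → m.degree (P * f) ≠ m.degree (Q * g) := by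
  intro hPf hQg h
  rw [degree_mul' hPf, degree_mul' hQg] at h
  exact hP _ (m.degree_mem_support (left_ne_zero_of_mul hPf))
    (Finsupp.le_of_add_eq_add_of_coprime hcop h)

theorem exists_standard_representation_smul_sPolynomial {f g : MvPolynomial σ R}
    (hcop : ∀ v, m.degree f v = 0 ∨ m.degree g v = 0) (c : R) :
    ∃ A B : MvPolynomial σ R, c • m.sPolynomial f g = A * f + B * g ∧
      ∀ x, x ∈ (A * f).support ∨ x ∈ (B * g).support →
        c • m.sPolynomial f g ≠ 0 ∧ x ≼[m] m.degree (c • m.sPolynomial f g) := by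
  have hA : ∀ x ∈ ((-c) • m.subLTerm g).support, ¬ m.degree g ≤ x := fun x hx hgx =>
    (toSyn_lt_of_mem_support_subLTerm (support_smul hx)).not_ge (m.toSyn_monotone hgx)
  have huv := degree_mul_ne_of_coprime (Q := c • m.subLTerm f) hcop hA
  have hS : c • m.sPolynomial f g = (-c) • m.subLTerm g * f + c • m.subLTerm f * g := by
    simp only [sPolynomial_eq_of_coprime hcop, smul_eq_C_mul, map_neg]
    ring
  refine ⟨_, _, hS, fun x hx => ?_⟩
  rw [hS]
  have h_ne_zero {p : MvPolynomial σ R} (hp : x ∈ p.support) : p ≠ 0 :=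
    support_nonempty.mp ⟨x, hp⟩
  exact ⟨add_ne_zero_of_degree_ne huv (hx.imp h_ne_zero h_ne_zero),
    le_degree_add_of_degree_ne huv hx⟩

end CommRing

variable {K : Type*} [Field K]

theorem le_degree_or_le_degree_of_mem_span_pair {f g h : MvPolynomial σ K} (hg : g ≠ 0)
    (hcop : ∀ v, m.degree f v = 0 ∨ m.degree g v = 0) (hh : h ∈ Ideal.span {f, g})
    (h0 : h ≠ 0) : m.degree f ≤ m.degree h ∨ m.degree g ≤ m.degree h := by
  obtain ⟨P, Q, rfl⟩ := Ideal.mem_span_pair.mp hh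
  obtain ⟨U, R, hPUR, -, hR⟩ := m.div_single (m.isUnit_leadingCoeff.mpr hg) P
  have hrep : P * f + Q * g = R * f + (Q + U * f) * g := by rw [hPUR]; ring
  rw [hrep] at h0 ⊢
  rcases degree_add_eq_or_of_degree_ne (degree_mul_ne_of_coprime hcop hR) h0 with
    ⟨hRf, e⟩ | ⟨hQg, e⟩ <;> rw [e]
  · exact .inl (degree_mul' hRf ▸ le_add_self)
  · exact .inr (degree_mul' hQg ▸ le_add_self)

theorem inv_leadingCoeff_mul_smul_sPolynomial {f g : MvPolynomial σ K} (hf : f ≠ 0)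
    (hg : g ≠ 0) :
    ((m.leadingCoeff f)⁻¹ * (m.leadingCoeff g)⁻¹) • m.sPolynomial f g =
      monomial (m.degree f ⊔ m.degree g - m.degree f) (m.leadingCoeff f)⁻¹ * f -
        monomial (m.degree f ⊔ m.degree g - m.degree g) (m.leadingCoeff g)⁻¹ * g := by
  have hlcf := m.leadingCoeff_ne_zero_iff.mpr hf
  have hlcg := m.leadingCoeff_ne_zero_iff.mpr hg
  rw [sPolynomial_def, smul_sub, ← smul_mul_assoc, ← smul_mul_assoc, smul_monomial,
    smul_monomial, smul_eq_mul, smul_eq_mul]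
  congr 3 <;> field_simp

end MonomialOrder

theorem MvPolynomial.monomial_mem_span_singleton_monomial {σ K : Type*} [Field K]
    {a d : σ →₀ ℕ} (had : a ≤ d) {ca : K} (hca : ca ≠ 0) (c : K) :
    monomial d c ∈ Ideal.span {monomial a ca} :=
  Ideal.mem_span_singleton.mpr
    (monomial_dvd_monomial.mpr ⟨.inr had, (isUnit_iff_ne_zero.mpr hca).dvd⟩)

namespace IsMonomialOrder

variable {N : ℕ} {le : (Fin N →₀ ℕ) → (Fin N →₀ ℕ) → Prop}

/-- A copy of `Fin N →₀ ℕ` on which `le` can be installed as the order without clashing with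
the pointwise order of `Finsupp`. -/
def Syn (_ : (Fin N →₀ ℕ) → (Fin N →₀ ℕ) → Prop) : Type := Fin N →₀ ℕ

noncomputable instance : AddCommMonoid (Syn le) :=
  inferInstanceAs (AddCommMonoid (Fin N →₀ ℕ))

noncomputable abbrev linearOrder (hle : IsMonomialOrder le) : LinearOrder (Syn le) :=
  haveI := hle.1
  { le := le
    le_refl := refl_of le
    le_trans := fun _ _ _ => trans_of le
    le_antisymm := fun _ _ => antisymm_of le
    le_total := total_of le
    toDecidableLE := Classical.decRel le }

theorem le_of_le_pointwise (hle : IsMonomialOrder le) {a b : Fin N →₀ ℕ} (hab : a ≤ b) :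
    le a b := by
  simpa [tsub_add_cancel_of_le hab] using hle.2.2 0 (b - a) a (hle.2.1 _)

noncomputable def toMonomialOrder (hle : IsMonomialOrder le) : MonomialOrder (Fin N) :=
  letI := hle.linearOrder
  { syn := Syn le
    isOrderedAddMonoid_syn := { add_le_add_left := fun a b hab c => hle.2.2 a b c hab }
    toSyn := AddEquiv.refl _
    toSyn_monotone := fun _ _ => hle.le_of_le_pointwise
    -- Dickson's lemma: the pointwise order is a well-quasi-order, and `le` extends it.
    wellFoundedLT_syn :=
      have : WellQuasiOrderedLE (Syn le) :=
        Monotone.wellQuasiOrderedLE_of_wellQuasiOrderedLE_of_surjective (α := Fin N →₀ ℕ)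
          (f := id) (fun _ _ => hle.le_of_le_pointwise) Function.surjective_id
      inferInstance }

theorem isLeadMono_iff (hle : IsMonomialOrder le) {K : Type*} [Field K]
    {f : MvPolynomial (Fin N) K} {d : Fin N →₀ ℕ} :
    IsLeadMono le f d ↔ f ≠ 0 ∧ hle.toMonomialOrder.degree f = d := by
  constructor
  · rintro ⟨hd, hmax⟩
    have hf : f ≠ 0 := support_nonempty.mp ⟨d, hd⟩
    exact ⟨hf, hle.toMonomialOrder.toSyn.injective <|
      le_antisymm (hmax _ (hle.toMonomialOrder.degree_mem_support hf))
        (hle.toMonomialOrder.le_degree hd)⟩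
  · rintro ⟨hf, rfl⟩
    exact ⟨hle.toMonomialOrder.degree_mem_support hf, fun _ => hle.toMonomialOrder.le_degree⟩

theorem initialIdeal_span_pair_of_coprime (hle : IsMonomialOrder le) {K : Type*} [Field K]
    {f g : MvPolynomial (Fin N) K} {a b : Fin N →₀ ℕ}
    (hfa : IsLeadMono le f a) (hgb : IsLeadMono le g b) (hcop : ∀ v, a v = 0 ∨ b v = 0) :
    initialIdeal le (Ideal.span {f, g}) =
      Ideal.span {monomial a (coeff a f), monomial b (coeff b g)} := by
  obtain ⟨-, rfl⟩ := hle.isLeadMono_iff.mp hfa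
  obtain ⟨hg, rfl⟩ := hle.isLeadMono_iff.mp hgb
  refine le_antisymm (Ideal.span_le.mpr ?_) (Ideal.span_le.mpr ?_)
  · rintro _ ⟨h, hh, d, hd, rfl⟩
    obtain ⟨h0, rfl⟩ := hle.isLeadMono_iff.mp hd
    rcases hle.toMonomialOrder.le_degree_or_le_degree_of_mem_span_pair hg hcop hh h0 with hfh | hgh
    · exact Ideal.span_mono (by simp) (monomial_mem_span_singleton_monomial hfh
        (mem_support_iff.mp hfa.1) _)
    · exact Ideal.span_mono (by simp) (monomial_mem_span_singleton_monomial hgh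
        (mem_support_iff.mp hgb.1) _)
  · rintro _ (rfl | rfl)
    · exact Ideal.subset_span ⟨f, Ideal.subset_span (by simp), _, hfa, rfl⟩
    · exact Ideal.subset_span ⟨g, Ideal.subset_span (by simp), _, hgb, rfl⟩

end IsMonomialOrder

theorem stmt1_general {K : Type*} [Field K] {N : ℕ}
    (le : (Fin N →₀ ℕ) → (Fin N →₀ ℕ) → Prop)
    (hle : IsMonomialOrder le)
    (f g : MvPolynomial (Fin N) K)
    (a b : Fin N →₀ ℕ)
    (hfa : IsLeadMono le f a) (hgb : IsLeadMono le g b)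
    (hcop : ∀ v, a v = 0 ∨ b v = 0) :
    (∃ A B : MvPolynomial (Fin N) K,
      (MvPolynomial.monomial ((a ⊔ b) - a) (MvPolynomial.coeff a f)⁻¹) * f -
        (MvPolynomial.monomial ((a ⊔ b) - b) (MvPolynomial.coeff b g)⁻¹) * g
        = A * f + B * g ∧
      ∀ m ∈ (A * f).support ∪ (B * g).support,
        ∃ ms, IsLeadMono le
          ((MvPolynomial.monomial ((a ⊔ b) - a) (MvPolynomial.coeff a f)⁻¹) * f -
            (MvPolynomial.monomial ((a ⊔ b) - b) (MvPolynomial.coeff b g)⁻¹) * g) ms ∧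
          le m ms) ∧
    initialIdeal le (Ideal.span {f, g}) =
      Ideal.span {MvPolynomial.monomial a (MvPolynomial.coeff a f),
        MvPolynomial.monomial b (MvPolynomial.coeff b g)} := by
  set m := hle.toMonomialOrder
  refine ⟨?_, hle.initialIdeal_span_pair_of_coprime hfa hgb hcop⟩
  obtain ⟨hf, rfl⟩ := hle.isLeadMono_iff.mp hfa
  obtain ⟨hg, rfl⟩ := hle.isLeadMono_iff.mp hgb
  obtain ⟨A, B, hAB, hstd⟩ := m.exists_standard_representation_smul_sPolynomial hcop
    ((m.leadingCoeff f)⁻¹ * (m.leadingCoeff g)⁻¹)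
  rw [m.inv_leadingCoeff_mul_smul_sPolynomial hf hg] at hAB hstd
  refine ⟨A, B, hAB, fun x hx => ?_⟩
  obtain ⟨hS0, hxS⟩ := hstd x (Finset.mem_union.mp hx)
  exact ⟨_, hle.isLeadMono_iff.mpr ⟨hS0, rfl⟩, hxS⟩

/-- If the leading monomials `a`, `b` of `f`, `g` are relatively prime,
then the S-polynomial `S(f,g)` reduces to zero modulo `{f,g}` (it admits a standard
representation `S = A·f + B·g` where every monomial of `A·f` and of `B·g` is
`≤` the leading monomial of `S`), and `{f,g}` is a Gröbner basis for the ideal it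
generates (its leading terms generate the initial ideal of `⟨f,g⟩`). -/
theorem stmt1 {K : Type*} [Field K] {N : ℕ}
    (le : (Fin N →₀ ℕ) → (Fin N →₀ ℕ) → Prop)
    (hle : IsMonomialOrder le)
    (f g : MvPolynomial (Fin N) K) (hf : f ≠ 0) (hg : g ≠ 0)
    (a b : Fin N →₀ ℕ)
    (hfa : IsLeadMono le f a) (hgb : IsLeadMono le g b)
    (hcop : ∀ v, a v = 0 ∨ b v = 0) :
    (∃ A B : MvPolynomial (Fin N) K,
      (MvPolynomial.monomial ((a ⊔ b) - a) (MvPolynomial.coeff a f)⁻¹) * f -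
        (MvPolynomial.monomial ((a ⊔ b) - b) (MvPolynomial.coeff b g)⁻¹) * g
        = A * f + B * g ∧
      ∀ m ∈ (A * f).support ∪ (B * g).support,
        ∃ ms, IsLeadMono le
          ((MvPolynomial.monomial ((a ⊔ b) - a) (MvPolynomial.coeff a f)⁻¹) * f -
            (MvPolynomial.monomial ((a ⊔ b) - b) (MvPolynomial.coeff b g)⁻¹) * g) ms ∧
          le m ms) ∧
    initialIdeal le (Ideal.span {f, g}) =
      Ideal.span {MvPolynomial.monomial a (MvPolynomial.coeff a f),
        MvPolynomial.monomial b (MvPolynomial.coeff b g)} :=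
  stmt1_general le hle f g a b hfa hgb hcop
end

section
/- Let n ≥ 3 and let M' be the generic n×n matrix over the polynomial ring K[x_{i,j} : i+j ≤ n] with entries M'_{i,j} = x_{i,j} for i+j ≤ n, M'_{i,j} = 1 for i+j = n+1, and M'_{i,j} = 0 for i+j > n+1. For 2 ≤ s ≤ n and 1 ≤ p < n with s + p ≤ n, the (n−2)×(n−2) minor of M' obtained by deleting rows 1 and s and columns p and n has determinant zero. -/
open MvPolynomial

/-- The generic antidiagonal-unipotent `n × n` matrix `M'` (the matrix `w₀M` of the
paper): indeterminate entries `x_{i,j}` strictly above the antidiagonal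
(1-indexed `i + j ≤ n`, i.e. 0-indexed `i + j < n - 1`), `1`'s on the antidiagonal,
and `0`'s below it. -/
noncomputable def genM (K : Type*) [Field K] (n : ℕ) :
    Matrix (Fin n) (Fin n) (MvPolynomial (Fin n × Fin n) K) := fun i j =>
  if (i : ℕ) + (j : ℕ) < n - 1 then MvPolynomial.X (i, j)
  else if (i : ℕ) + (j : ℕ) = n - 1 then 1 else 0

/-!
In the Leibniz expansion every permutation `σ` of the `n - 2` remaining columns sends one of
the last `s - 1` columns to one of the last `n - s` rows, since `(s - 1) + (n - s) > n - 2`.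
Such an entry lies below the antidiagonal of `M'`, so every term of the expansion vanishes.
-/

open Finset

/-- The easy direction of the Frobenius–König theorem. -/
theorem Matrix.det_eq_zero_of_zero_block {ι R : Type*} [Fintype ι] [DecidableEq ι] [CommRing R]
    (A : Matrix ι ι R) (S T : Finset ι) (hcard : Fintype.card ι < #S + #T)
    (hA : ∀ i ∈ S, ∀ j ∈ T, A i j = 0) : A.det = 0 := by
  rw [Matrix.det_apply]
  refine sum_eq_zero fun σ _ => ?_
  obtain ⟨i, hi⟩ : (S ∩ T.map σ.toEmbedding).Nonempty :=
    inter_nonempty_of_card_lt_card_add_card (subset_univ _) (subset_univ _)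
      (by rwa [card_map, card_univ])
  obtain ⟨hiS, hiT⟩ := mem_inter.mp hi
  obtain ⟨j, hj, rfl⟩ := mem_map.mp hiT
  exact smul_eq_zero_of_right _ (prod_eq_zero (mem_univ j) (hA (σ j) hiS j hj))

theorem Fin.card_filter_le_val (m k : ℕ) : #{i : Fin m | k ≤ (i : ℕ)} = m - k := by
  have h := card_filter_add_card_filter_not (s := univ) (fun i : Fin m => (i : ℕ) < k)
  simp only [Fin.card_filter_val_lt, not_lt, card_univ, Fintype.card_fin] at h
  omega

theorem genM_eq_zero_of_lt {K : Type*} [Field K] {n : ℕ} (i j : Fin n)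
    (h : n - 1 < (i : ℕ) + j) : genM K n i j = 0 := by
  rw [genM, if_neg (by omega), if_neg (by omega)]

/-- For `2 ≤ s ≤ n` and `1 ≤ p < n` with `s + p ≤ n` (1-indexed),
the `(n-2) × (n-2)` minor of `M'` obtained by deleting rows `1` and `s` and columns
`p` and `n` has determinant zero. -/
theorem stmt4 {K : Type*} [Field K] {n : ℕ}
    (s p : ℕ) (hs2 : 2 ≤ s) (hp1 : 1 ≤ p) (hsp : s + p ≤ n) :
    Matrix.det ((genM K n).submatrix
      (fun a : Fin (n - 2) =>
        (⟨if a.val + 1 < s - 1 then a.val + 1 else a.val + 2,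
          by have := a.isLt; split <;> omega⟩ : Fin n))
      (fun a : Fin (n - 2) =>
        (⟨if a.val < p - 1 then a.val else a.val + 1,
          by have := a.isLt; split <;> omega⟩ : Fin n))) = 0 := by
  refine Matrix.det_eq_zero_of_zero_block _ {i | s - 2 ≤ (i : ℕ)} {j | n - s - 1 ≤ (j : ℕ)}
    ?_ fun i hi j hj => genM_eq_zero_of_lt _ _ ?_
  · rw [Fin.card_filter_le_val, Fin.card_filter_le_val, Fintype.card_fin]
    omega
  · simp only [mem_filter, mem_univ, true_and] at hi hj
    have hrow : ¬((i : ℕ) + 1 < s - 1) := by omega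
    have hcol : ¬((j : ℕ) < p - 1) := by omega
    simp only [if_neg hrow, if_neg hcol]
    omega
end

section
/- Let n ≥ 3, M' the generic antidiagonal-unipotent matrix as above, and N the n×n nilpotent Jordan matrix with 1's on the superdiagonal. Define f_{k,ℓ} to be the (k,ℓ)-entry of (M')^{-1} N M' (over the fraction field, noting all these entries are polynomials). Then for every 1 ≤ ℓ ≤ n−1, f_{ℓ+1,ℓ} = 1. -/
open MvPolynomial

/-- The regular nilpotent Jordan matrix `N`, with `1`'s on the superdiagonal. -/
noncomputable def nilpMat (K : Type*) [Field K] (n : ℕ) :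
    Matrix (Fin n) (Fin n) (MvPolynomial (Fin n × Fin n) K) := fun i j =>
  if (j : ℕ) = (i : ℕ) + 1 then 1 else 0

/-- The matrix `(M')⁻¹ N M'`, whose `(k,ℓ)` entry is the polynomial `f_{k,ℓ}`. -/
noncomputable def hessMat (K : Type*) [Field K] (n : ℕ) :
    Matrix (Fin n) (Fin n) (MvPolynomial (Fin n × Fin n) K) :=
  (genM K n)⁻¹ * nilpMat K n * genM K n

/-!
Reversing the rows of `M'` gives a lower unitriangular matrix `L`, and conjugating `N` by the
reversal gives `Nᵀ`, so `(M')⁻¹ N M' = L⁻¹ Nᵀ L`. For lower triangular `A`, `B` and strictly lower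
triangular `T`, the subdiagonal entries of `A T B` are `A i i * T i j * B j j`; here `L` and `L⁻¹`
are unitriangular and `Nᵀ` has `1`'s on the subdiagonal.
-/

namespace Matrix

variable {α R : Type*} [LinearOrder α] [Fintype α] [NonUnitalNonAssocSemiring R]
  {A B T : Matrix α α R}

theorem IsLowerTriangular.mul_apply_self (hA : A.IsLowerTriangular) (hB : B.IsLowerTriangular)
    (i : α) : (A * B) i i = A i i * B i i := by
  rw [mul_apply, Finset.sum_eq_single i]
  · intro b _ hbi
    rcases hbi.lt_or_gt with hb | hb
    · rw [hB (OrderDual.toDual_lt_toDual.2 hb), mul_zero]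
    · rw [hA (OrderDual.toDual_lt_toDual.2 hb), zero_mul]
  · simp

theorem IsLowerTriangular.mul_mul_apply_of_covBy (hA : A.IsLowerTriangular)
    (hB : B.IsLowerTriangular) (hT : ∀ a b, a ≤ b → T a b = 0) {i j : α} (hji : j ⋖ i) :
    (A * T * B) i j = A i i * T i j * B j j := by
  have hAT : (A * T) i j = A i i * T i j := by
    rw [mul_apply, Finset.sum_eq_single i]
    · intro a _ hai
      rcases hai.lt_or_gt with ha | ha
      · rw [hT a j (hji.le_of_lt ha), mul_zero]
      · rw [hA (OrderDual.toDual_lt_toDual.2 ha), zero_mul]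
    · simp
  rw [mul_apply, Finset.sum_eq_single j, hAT]
  · intro b _ hbj
    rcases hbj.lt_or_gt with hb | hb
    · rw [hB (OrderDual.toDual_lt_toDual.2 hb), mul_zero]
    · suffices (A * T) i b = 0 by rw [this, zero_mul]
      refine Finset.sum_eq_zero fun a _ => ?_
      rcases le_or_gt a b with hab | hba
      · exact mul_eq_zero_of_right _ (hT a b hab)
      · refine mul_eq_zero_of_left (hA (OrderDual.toDual_lt_toDual.2 ?_)) _
        exact lt_of_not_ge fun hai => hji.2 hb (hba.trans_le hai)
  · simp

end Matrix

section LowerGenM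

open Matrix

/-- `w₀ M'`, the generic lower unitriangular matrix `M` of the paper. -/
noncomputable def lowerGenM (K : Type*) [Field K] (n : ℕ) :
    Matrix (Fin n) (Fin n) (MvPolynomial (Fin n × Fin n) K) :=
  (genM K n).submatrix Fin.rev id

variable {K : Type*} [Field K] {n : ℕ}

theorem lowerGenM_isLowerTriangular : (lowerGenM K n).IsLowerTriangular := by
  intro i j hij
  have : (i : ℕ) < j := hij
  simp only [lowerGenM, genM, submatrix_apply, id, Fin.val_rev]
  rw [if_neg (by omega), if_neg (by omega)]

theorem lowerGenM_apply_self (i : Fin n) : lowerGenM K n i i = 1 := by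
  simp only [lowerGenM, genM, submatrix_apply, id, Fin.val_rev]
  rw [if_neg (by omega), if_pos (by omega)]

theorem det_lowerGenM : (lowerGenM K n).det = 1 := by
  rw [det_of_isLowerTriangular _ lowerGenM_isLowerTriangular]
  exact Finset.prod_eq_one fun i _ => lowerGenM_apply_self i

theorem isUnit_det_lowerGenM : IsUnit (lowerGenM K n).det := by
  rw [det_lowerGenM]
  exact isUnit_one

theorem inv_lowerGenM_isLowerTriangular : (lowerGenM K n)⁻¹.IsLowerTriangular := by
  have := invertibleOfIsUnitDet (lowerGenM K n) isUnit_det_lowerGenM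
  exact blockTriangular_inv_of_blockTriangular lowerGenM_isLowerTriangular

theorem inv_lowerGenM_apply_self (i : Fin n) : (lowerGenM K n)⁻¹ i i = 1 := by
  have h := (inv_lowerGenM_isLowerTriangular (K := K)).mul_apply_self
    lowerGenM_isLowerTriangular i
  rwa [nonsing_inv_mul _ isUnit_det_lowerGenM, one_apply_eq, lowerGenM_apply_self,
    mul_one, eq_comm] at h

theorem nilpMat_submatrix_rev :
    (nilpMat K n).submatrix Fin.revPerm Fin.revPerm = (nilpMat K n)ᵀ := by
  refine Matrix.ext fun i j => ?_
  simp only [nilpMat, submatrix_apply, transpose_apply, Fin.revPerm_apply, Fin.val_rev]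
  exact if_congr (by omega) rfl rfl

theorem nilpMat_transpose_apply_of_le {i j : Fin n} (h : i ≤ j) : (nilpMat K n)ᵀ i j = 0 := by
  rw [Fin.le_def] at h
  rw [transpose_apply, nilpMat, if_neg (by omega)]

theorem nilpMat_transpose_apply_of_covBy {i j : Fin n} (h : j ⋖ i) : (nilpMat K n)ᵀ i j = 1 := by
  rw [transpose_apply, nilpMat, if_pos]
  exact (Nat.covBy_iff_add_one_eq.1 (Fin.covBy_iff.1 h)).symm

theorem hessMat_eq : hessMat K n = (lowerGenM K n)⁻¹ * (nilpMat K n)ᵀ * lowerGenM K n := by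
  have hM : genM K n = (lowerGenM K n).submatrix Fin.revPerm (Equiv.refl _) := by
    refine Matrix.ext fun i j => ?_
    simp [lowerGenM]
  have hN : nilpMat K n = (nilpMat K n)ᵀ.submatrix Fin.revPerm.symm Fin.revPerm.symm := by
    rw [← nilpMat_submatrix_rev]
    simp only [submatrix_submatrix, Equiv.self_comp_symm, submatrix_id_id]
  conv_lhs => rw [hessMat, hM, inv_submatrix_equiv, hN, Fin.revPerm_symm, submatrix_mul_equiv,
    submatrix_mul_equiv]
  simp

end LowerGenM

/-- For `1 ≤ ℓ ≤ n - 1` (1-indexed), `f_{ℓ+1,ℓ} = 1`.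
In 0-indexed terms, the entry of `(M')⁻¹ N M'` at row `ℓ`, column `ℓ - 1`
is `1`. -/
theorem stmt5 {K : Type*} [Field K] {n : ℕ}
    (l : ℕ) (hl1 : 1 ≤ l) (hln : l ≤ n - 1) :
    hessMat K n ⟨l, by omega⟩ ⟨l - 1, by omega⟩ = 1 := by
  have hcov : (⟨l - 1, by omega⟩ : Fin n) ⋖ ⟨l, by omega⟩ := by
    rw [Fin.covBy_iff, Nat.covBy_iff_add_one_eq, Fin.val_mk, Fin.val_mk]
    omega
  rw [hessMat_eq, inv_lowerGenM_isLowerTriangular.mul_mul_apply_of_covBy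
    lowerGenM_isLowerTriangular (fun _ _ => nilpMat_transpose_apply_of_le) hcov,
    inv_lowerGenM_apply_self, lowerGenM_apply_self, nilpMat_transpose_apply_of_covBy hcov,
    one_mul, mul_one]
end

section
/- Let n ≥ 3 and let f_{k,ℓ} denote the (k,ℓ)-entry of (M')^{-1} N M', where M' is the generic antidiagonal-unipotent matrix and N the regular nilpotent Jordan matrix. Then for all 1 ≤ ℓ < k ≤ n with k > ℓ+1, the recursion f_{k,ℓ} = x_{n+2−k,ℓ} − Σ_{p=ℓ+1}^{k−1} x_{n+1−k,p} · f_{p,ℓ} holds. -/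
open MvPolynomial

/-! Reversing the rows of `M'` gives a lower unitriangular matrix, so `M'` is invertible and
row `rev k` of `M' H = N M'` (with `H = M'⁻¹ N M'`) reads
`f_{k,q} + ∑_{j<k} x_{rev k, j} f_{j,q} = M'_{rev k + 1, q}`.
Induction on `k` along this identity shows that `H` is strictly lower triangular, which cuts
the sum down to `q < j < k`; for `q + 1 < k` the entry `M'_{rev k + 1, q}` lies above the
antidiagonal, so it is a variable. -/

section

variable {K : Type*} [Field K] {n : ℕ}

lemma genM_rev_apply (i j : Fin n) :
    genM K n i.rev j = if j < i then X (i.rev, j) else if j = i then 1 else 0 := by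
  have := i.isLt
  simp only [genM, Fin.val_rev, Fin.lt_def, Fin.ext_iff]
  split_ifs <;> first | rfl | (exfalso; omega)

lemma det_genM_submatrix_revPerm : ((genM K n).submatrix Fin.revPerm id).det = 1 := by
  have hlower : ((genM K n).submatrix Fin.revPerm id).IsLowerTriangular := by
    intro i j hij
    have hij : i < j := OrderDual.toDual_lt_toDual.mp hij
    simp [genM_rev_apply, hij.not_gt, hij.ne']
  rw [Matrix.det_of_isLowerTriangular _ hlower]
  simp [genM_rev_apply]

lemma isUnit_det_genM : IsUnit (genM K n).det := by
  have h := Matrix.det_permute Fin.revPerm (genM K n)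
  rw [det_genM_submatrix_revPerm] at h
  exact .of_mul_eq_one_right _ h.symm

lemma genM_mul_hessMat : genM K n * hessMat K n = nilpMat K n * genM K n := by
  rw [hessMat, ← Matrix.mul_assoc, ← Matrix.mul_assoc,
    Matrix.mul_nonsing_inv _ isUnit_det_genM, Matrix.one_mul]

lemma nilpMat_mul_apply (A : Matrix (Fin n) (Fin n) (MvPolynomial (Fin n × Fin n) K))
    (i j : Fin n) :
    (nilpMat K n * A) i j = if h : (i : ℕ) + 1 < n then A ⟨i + 1, h⟩ j else 0 := by
  simp only [Matrix.mul_apply, nilpMat, ite_mul, one_mul, zero_mul]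
  split_ifs with h
  · rw [Finset.sum_eq_single ⟨i + 1, h⟩ (fun p _ hp => if_neg (mt Fin.ext hp)) (by simp),
      if_pos rfl]
  · exact Finset.sum_eq_zero fun p _ => if_neg (by omega)

lemma genM_mul_apply_rev (A : Matrix (Fin n) (Fin n) (MvPolynomial (Fin n × Fin n) K))
    (k q : Fin n) :
    (genM K n * A) k.rev q = A k q + ∑ j ∈ Finset.Iio k, X (k.rev, j) * A j q := by
  simp only [Matrix.mul_apply, genM_rev_apply, ite_mul, one_mul, zero_mul]
  rw [Finset.sum_ite, Finset.filter_gt_eq_Iio, Finset.sum_ite_eq' _ k, if_pos (by simp),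
    add_comm]

lemma hessMat_apply (k q : Fin n) :
    hessMat K n k q =
      (nilpMat K n * genM K n) k.rev q - ∑ j ∈ Finset.Iio k, X (k.rev, j) * hessMat K n j q := by
  rw [eq_sub_iff_add_eq, ← genM_mul_apply_rev, genM_mul_hessMat]

lemma hessMat_apply_eq_zero_of_le {k q : Fin n} (hkq : k ≤ q) : hessMat K n k q = 0 := by
  induction k using WellFoundedLT.induction with
  | _ k ih =>
    have hsum : ∑ j ∈ Finset.Iio k, X (k.rev, j) * hessMat K n j q = 0 :=
      Finset.sum_eq_zero fun j hj => by
        rw [ih j (Finset.mem_Iio.mp hj) ((Finset.mem_Iio.mp hj).le.trans hkq), mul_zero]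
    rw [hessMat_apply, hsum, sub_zero, nilpMat_mul_apply]
    have := Fin.le_def.mp hkq
    split_ifs
    · simp only [genM, Fin.val_rev]
      rw [if_neg (by omega), if_neg (by omega)]
    · rfl

end

/-- Indices are 0-based: `f_{k,ℓ}` is the entry at `(k-1, ℓ-1)`, the 1-indexed variable
`x_{a,b}` is `X (a-1, b-1)`, and the summation index `p` of the paper is `p.val + 1`. -/
theorem stmt6 {K : Type*} [Field K] {n : ℕ}
    (k l : ℕ) (hl1 : 1 ≤ l) (hlk : l + 1 < k) (hkn : k ≤ n) :
    hessMat K n ⟨k - 1, by omega⟩ ⟨l - 1, by omega⟩ =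
      MvPolynomial.X ((⟨n + 1 - k, by omega⟩ : Fin n), (⟨l - 1, by omega⟩ : Fin n)) -
      ∑ p : Fin n, if l ≤ (p : ℕ) ∧ (p : ℕ) + 1 < k then
        MvPolynomial.X ((⟨n - k, by omega⟩ : Fin n), (⟨(p : ℕ), p.isLt⟩ : Fin n)) *
          hessMat K n p ⟨l - 1, by omega⟩
      else 0 := by
  have hrev : Fin.rev (⟨k - 1, by omega⟩ : Fin n) = ⟨n - k, by omega⟩ := by
    ext; simp only [Fin.val_rev]; omega
  rw [hessMat_apply, nilpMat_mul_apply, hrev, dif_pos (by simp only; omega), ← Finset.sum_filter]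
  congr 1
  · simp only [genM]
    rw [if_pos (by omega)]
    congr 3; omega
  · refine (Finset.sum_subset (fun p hp => ?_) fun p hp hp' => ?_).symm
    · simp only [Finset.mem_filter, Finset.mem_univ, true_and] at hp
      simp only [Finset.mem_Iio, Fin.lt_def]
      omega
    · simp only [Finset.mem_filter, Finset.mem_univ, true_and, Finset.mem_Iio, Fin.lt_def] at hp hp'
      rw [hessMat_apply_eq_zero_of_le (by simp only [Fin.le_def]; omega), mul_zero]
end
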